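/- arXiv:2205.00291 — 4 statements merged into one kernel-verified Lean document; each statement's English description precedes it below -/
import Mathlib

section
/- Let A and B be real m×n matrices with all entries strictly positive, and let (p₁, p₂) be an LCP solution for (A, B). Then Σᵢ (p₁)ᵢ > 0 and Σⱼ (p₂)ⱼ > 0, and the normalized vectors q₁ = p₁ / Σᵢ (p₁)ᵢ and q₂ = p₂ / Σⱼ (p₂)ⱼ form a Nash equilibrium of the bimatrix game (A, B) with both players minimizing. -/
open scoped Matrix

/-- `(p₁, p₂)` is an LCP solution for the bimatrix game `(A, B)`:
nonnegativity, `A p₂ ≥ 𝟙`, `Bᵀ p₁ ≥ 𝟙`, and complementarity. -/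
def IsLCPSolution {m n : ℕ} (A B : Matrix (Fin m) (Fin n) ℝ)
    (p₁ : Fin m → ℝ) (p₂ : Fin n → ℝ) : Prop :=
  (∀ i, 0 ≤ p₁ i) ∧ (∀ j, 0 ≤ p₂ j) ∧
  (∀ i, 1 ≤ A.mulVec p₂ i) ∧ (∀ j, 1 ≤ Bᵀ.mulVec p₁ j) ∧
  (∀ i, p₁ i * (A.mulVec p₂ i - 1) = 0) ∧
  (∀ j, p₂ j * (Bᵀ.mulVec p₁ j - 1) = 0)

/-- Membership in the probability simplex. -/
def InSimplex {k : ℕ} (q : Fin k → ℝ) : Prop :=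
  (∀ i, 0 ≤ q i) ∧ ∑ i, q i = 1

/-- `(q₁, q₂)` is a Nash equilibrium of the bimatrix game `(A, B)` with both
players minimizing. -/
def IsBimatrixNash {m n : ℕ} (A B : Matrix (Fin m) (Fin n) ℝ)
    (q₁ : Fin m → ℝ) (q₂ : Fin n → ℝ) : Prop :=
  InSimplex q₁ ∧ InSimplex q₂ ∧
  (∀ q₁' : Fin m → ℝ, InSimplex q₁' → q₁ ⬝ᵥ A.mulVec q₂ ≤ q₁' ⬝ᵥ A.mulVec q₂) ∧
  (∀ q₂' : Fin n → ℝ, InSimplex q₂' → q₁ ⬝ᵥ B.mulVec q₂ ≤ q₁ ⬝ᵥ B.mulVec q₂')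

theorem lcp_solution_normalized_is_nash {m n : ℕ}
    (hm : 0 < m) (hn : 0 < n) (A B : Matrix (Fin m) (Fin n) ℝ)
    (hA : ∀ i j, 0 < A i j) (hB : ∀ i j, 0 < B i j)
    (p₁ : Fin m → ℝ) (p₂ : Fin n → ℝ) (h : IsLCPSolution A B p₁ p₂) :
    0 < ∑ i, p₁ i ∧ 0 < ∑ j, p₂ j ∧
    IsBimatrixNash A B (fun i => p₁ i / ∑ i', p₁ i') (fun j => p₂ j / ∑ j', p₂ j') := by
  obtain ⟨h1, h2, h3, h4, h5, h6⟩ := h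
  set s := ∑ i, p₁ i with hs_def
  set t := ∑ j, p₂ j with ht_def
  have hs : 0 < s := by
    by_contra hc
    push_neg at hc
    have h0 : s = 0 := le_antisymm hc (Finset.sum_nonneg fun i _ => h1 i)
    have hz : ∀ i, p₁ i = 0 := fun i =>
      (Finset.sum_eq_zero_iff_of_nonneg (fun i _ => h1 i)).1 h0 i (Finset.mem_univ i)
    have := h4 ⟨0, hn⟩
    simp [Matrix.mulVec, dotProduct, hz] at this
    linarith
  have ht : 0 < t := by
    by_contra hc
    push_neg at hc
    have h0 : t = 0 := le_antisymm hc (Finset.sum_nonneg fun j _ => h2 j)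
    have hz : ∀ j, p₂ j = 0 := fun j =>
      (Finset.sum_eq_zero_iff_of_nonneg (fun j _ => h2 j)).1 h0 j (Finset.mem_univ j)
    have := h3 ⟨0, hm⟩
    simp [Matrix.mulVec, dotProduct, hz] at this
    linarith
  have key1 : p₁ ⬝ᵥ A.mulVec p₂ = s :=
    Finset.sum_congr rfl fun i _ => by linear_combination h5 i
  have key2 : (Bᵀ.mulVec p₁) ⬝ᵥ p₂ = t :=
    Finset.sum_congr rfl fun j _ => by linear_combination h6 j
  have hq1 : (fun i => p₁ i / s) = s⁻¹ • p₁ := by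
    funext i; simp [div_eq_inv_mul]
  have hq2 : (fun j => p₂ j / t) = t⁻¹ • p₂ := by
    funext j; simp [div_eq_inv_mul]
  have simplex1 : InSimplex (fun i => p₁ i / s) := by
    refine ⟨fun i => div_nonneg (h1 i) hs.le, ?_⟩
    rw [← Finset.sum_div]
    exact div_self hs.ne'
  have simplex2 : InSimplex (fun j => p₂ j / t) := by
    refine ⟨fun j => div_nonneg (h2 j) ht.le, ?_⟩
    rw [← Finset.sum_div]
    exact div_self ht.ne'
  refine ⟨hs, ht, simplex1, simplex2, ?_, ?_⟩
  · intro q₁' hq₁'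
    have hval : (fun i => p₁ i / s) ⬝ᵥ A.mulVec (fun j => p₂ j / t) = t⁻¹ := by
      rw [hq1, hq2, Matrix.mulVec_smul, dotProduct_smul, smul_dotProduct,
        key1, smul_eq_mul, smul_eq_mul]
      field_simp
    have hbound : t⁻¹ ≤ q₁' ⬝ᵥ A.mulVec (fun j => p₂ j / t) := by
      rw [hq2, Matrix.mulVec_smul, dotProduct_smul, smul_eq_mul]
      have hge : (1:ℝ) ≤ q₁' ⬝ᵥ A.mulVec p₂ := by
        calc (1:ℝ) = ∑ i, q₁' i := hq₁'.2.symm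
          _ ≤ ∑ i, q₁' i * A.mulVec p₂ i := by
              refine Finset.sum_le_sum fun i _ => ?_
              have := h3 i
              nlinarith [hq₁'.1 i]
          _ = q₁' ⬝ᵥ A.mulVec p₂ := rfl
      calc t⁻¹ = t⁻¹ * 1 := (mul_one _).symm
        _ ≤ t⁻¹ * (q₁' ⬝ᵥ A.mulVec p₂) := by
            exact mul_le_mul_of_nonneg_left hge (inv_nonneg.2 ht.le)
    rw [hval]; exact hbound
  · intro q₂' hq₂'
    have hrw : ∀ w : Fin n → ℝ, (fun i => p₁ i / s) ⬝ᵥ B.mulVec w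
        = s⁻¹ * ((Bᵀ.mulVec p₁) ⬝ᵥ w) := by
      intro w
      rw [hq1, Matrix.dotProduct_mulVec, Matrix.smul_vecMul, smul_dotProduct,
        smul_eq_mul, ← Matrix.mulVec_transpose]
    have hval : (fun i => p₁ i / s) ⬝ᵥ B.mulVec (fun j => p₂ j / t) = s⁻¹ := by
      rw [hrw, hq2, dotProduct_smul, smul_eq_mul, key2]
      field_simp
    have hbound : s⁻¹ ≤ (fun i => p₁ i / s) ⬝ᵥ B.mulVec q₂' := by
      rw [hrw]
      have hge : (1:ℝ) ≤ (Bᵀ.mulVec p₁) ⬝ᵥ q₂' := by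
        calc (1:ℝ) = ∑ j, q₂' j := hq₂'.2.symm
          _ ≤ ∑ j, Bᵀ.mulVec p₁ j * q₂' j := by
              refine Finset.sum_le_sum fun j _ => ?_
              have := h4 j
              nlinarith [hq₂'.1 j]
          _ = (Bᵀ.mulVec p₁) ⬝ᵥ q₂' := rfl
      calc s⁻¹ = s⁻¹ * 1 := (mul_one _).symm
        _ ≤ s⁻¹ * ((Bᵀ.mulVec p₁) ⬝ᵥ q₂') := by
            exact mul_le_mul_of_nonneg_left hge (inv_nonneg.2 hs.le)
    rw [hval]; exact hbound
end

section
/- Let A and B be real m×n matrices with all entries strictly positive, and let (q₁, q₂) be a Nash equilibrium of the bimatrix game (A, B) with both players minimizing. Then q₁ᵀ A q₂ > 0 and q₁ᵀ B q₂ > 0, and the rescaled vectors p₁ = q₁ / (q₁ᵀ B q₂) and p₂ = q₂ / (q₁ᵀ A q₂) form an LCP solution for (A, B). -/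
open scoped Matrix

lemma single_inSimplex {k : ℕ} (i : Fin k) : InSimplex (Pi.single i (1 : ℝ)) := by
  refine ⟨fun j => ?_, by simp⟩
  rcases eq_or_ne j i with rfl | hne
  · simp
  · simp [Pi.single_apply, hne]

theorem nash_rescaled_is_lcp_solution {m n : ℕ}
    (hm : 0 < m) (hn : 0 < n) (A B : Matrix (Fin m) (Fin n) ℝ)
    (hA : ∀ i j, 0 < A i j) (hB : ∀ i j, 0 < B i j)
    (q₁ : Fin m → ℝ) (q₂ : Fin n → ℝ) (h : IsBimatrixNash A B q₁ q₂) :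
    0 < q₁ ⬝ᵥ A.mulVec q₂ ∧ 0 < q₁ ⬝ᵥ B.mulVec q₂ ∧
    IsLCPSolution A B (fun i => q₁ i / (q₁ ⬝ᵥ B.mulVec q₂))
      (fun j => q₂ j / (q₁ ⬝ᵥ A.mulVec q₂)) := by
  obtain ⟨⟨hq1n, hq1s⟩, ⟨hq2n, hq2s⟩, hN1, hN2⟩ := h
  -- positive components exist
  obtain ⟨i₀, -, hi₀⟩ : ∃ i ∈ Finset.univ, q₁ i ≠ 0 :=
    Finset.exists_ne_zero_of_sum_ne_zero (by rw [hq1s]; norm_num)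
  obtain ⟨j₀, -, hj₀⟩ : ∃ j ∈ Finset.univ, q₂ j ≠ 0 :=
    Finset.exists_ne_zero_of_sum_ne_zero (by rw [hq2s]; norm_num)
  have hi₀' : 0 < q₁ i₀ := lt_of_le_of_ne (hq1n i₀) (Ne.symm hi₀)
  have hj₀' : 0 < q₂ j₀ := lt_of_le_of_ne (hq2n j₀) (Ne.symm hj₀)
  have hAv : ∀ i, 0 < A.mulVec q₂ i := by
    intro i
    simp only [Matrix.mulVec, dotProduct]
    exact Finset.sum_pos' (fun j _ => mul_nonneg (hA i j).le (hq2n j))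
      ⟨j₀, Finset.mem_univ j₀, mul_pos (hA i j₀) hj₀'⟩
  have hBv : ∀ i, 0 < B.mulVec q₂ i := by
    intro i
    simp only [Matrix.mulVec, dotProduct]
    exact Finset.sum_pos' (fun j _ => mul_nonneg (hB i j).le (hq2n j))
      ⟨j₀, Finset.mem_univ j₀, mul_pos (hB i j₀) hj₀'⟩
  set vA := q₁ ⬝ᵥ A.mulVec q₂ with hvA
  set vB := q₁ ⬝ᵥ B.mulVec q₂ with hvB
  have hvApos : 0 < vA :=
    Finset.sum_pos' (fun i _ => mul_nonneg (hq1n i) (hAv i).le)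
      ⟨i₀, Finset.mem_univ i₀, mul_pos hi₀' (hAv i₀)⟩
  have hvBpos : 0 < vB :=
    Finset.sum_pos' (fun i _ => mul_nonneg (hq1n i) (hBv i).le)
      ⟨i₀, Finset.mem_univ i₀, mul_pos hi₀' (hBv i₀)⟩
  -- pure strategy deviations
  have hgeA : ∀ i, vA ≤ A.mulVec q₂ i := by
    intro i
    have := hN1 (Pi.single i 1) (single_inSimplex i)
    simpa [single_dotProduct] using this
  have hgeB : ∀ j, vB ≤ Bᵀ.mulVec q₁ j := by
    intro j
    have := hN2 (Pi.single j 1) (single_inSimplex j)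
    have hr : q₁ ⬝ᵥ B.mulVec (Pi.single j 1) = Bᵀ.mulVec q₁ j := by
      simp [dotProduct, Matrix.mulVec, Matrix.transpose_apply,
        Pi.single_apply, mul_comm, Finset.sum_ite_eq', Finset.mul_sum]
    rwa [hr] at this
  -- complementarity at the unnormalized level
  have hsumA : ∑ i, q₁ i * (A.mulVec q₂ i - vA) = 0 := by
    have : ∑ i, q₁ i * (A.mulVec q₂ i - vA)
        = (∑ i, q₁ i * A.mulVec q₂ i) - (∑ i, q₁ i) * vA := by
      rw [Finset.sum_mul]
      simp [mul_sub, Finset.sum_sub_distrib]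
    rw [this, hq1s, one_mul]
    simp [hvA, dotProduct]
  have hcompA : ∀ i, q₁ i * (A.mulVec q₂ i - vA) = 0 := by
    intro i
    have := (Finset.sum_eq_zero_iff_of_nonneg
      (fun i _ => mul_nonneg (hq1n i) (sub_nonneg.mpr (hgeA i)))).mp hsumA
    exact this i (by simp)
  have hvB' : vB = ∑ j, q₂ j * Bᵀ.mulVec q₁ j := by
    rw [hvB, Matrix.dotProduct_mulVec, ← Matrix.mulVec_transpose]
    simp [dotProduct, mul_comm]
  have hsumB : ∑ j, q₂ j * (Bᵀ.mulVec q₁ j - vB) = 0 := by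
    have : ∑ j, q₂ j * (Bᵀ.mulVec q₁ j - vB)
        = (∑ j, q₂ j * Bᵀ.mulVec q₁ j) - (∑ j, q₂ j) * vB := by
      rw [Finset.sum_mul]
      simp [mul_sub, Finset.sum_sub_distrib]
    rw [this, hq2s, one_mul, ← hvB', sub_self]
  have hcompB : ∀ j, q₂ j * (Bᵀ.mulVec q₁ j - vB) = 0 := by
    intro j
    have := (Finset.sum_eq_zero_iff_of_nonneg
      (fun j _ => mul_nonneg (hq2n j) (sub_nonneg.mpr (hgeB j)))).mp hsumB
    exact this j (by simp)
  -- rescaling identities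
  have hA2 : ∀ i, A.mulVec (fun j => q₂ j / vA) i = A.mulVec q₂ i / vA := by
    intro i
    simp only [Matrix.mulVec, dotProduct]
    rw [Finset.sum_div]
    exact Finset.sum_congr rfl fun j _ => (mul_div_assoc _ _ _).symm
  have hB2 : ∀ j, Bᵀ.mulVec (fun i => q₁ i / vB) j = Bᵀ.mulVec q₁ j / vB := by
    intro j
    simp only [Matrix.mulVec, dotProduct]
    rw [Finset.sum_div]
    exact Finset.sum_congr rfl fun i _ => (mul_div_assoc _ _ _).symm
  refine ⟨hvApos, hvBpos, fun i => div_nonneg (hq1n i) hvBpos.le,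
    fun j => div_nonneg (hq2n j) hvApos.le, ?_, ?_, ?_, ?_⟩
  · intro i
    rw [hA2 i]
    exact (one_le_div hvApos).mpr (hgeA i)
  · intro j
    rw [hB2 j]
    exact (one_le_div hvBpos).mpr (hgeB j)
  · intro i
    rw [hA2 i]
    rcases mul_eq_zero.mp (hcompA i) with h0 | h0
    · simp [h0]
    · have : A.mulVec q₂ i = vA := by linarith [sub_eq_zero.mp h0]
      rw [this, div_self hvApos.ne']
      simp
  · intro j
    rw [hB2 j]
    rcases mul_eq_zero.mp (hcompB j) with h0 | h0
    · simp [h0]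
    · have : Bᵀ.mulVec q₁ j = vB := by linarith [sub_eq_zero.mp h0]
      rw [this, div_self hvBpos.ne']
      simp
end

section
/- Let A and B be real m×n matrices with all entries strictly positive. Then the normalization map (p₁, p₂) ↦ (p₁ / Σᵢ (p₁)ᵢ, p₂ / Σⱼ (p₂)ⱼ) is a bijection from the set of LCP solutions for (A, B) onto the set of Nash equilibria of the bimatrix game (A, B) with both players minimizing, and its inverse is the map (q₁, q₂) ↦ (q₁ / (q₁ᵀ B q₂), q₂ / (q₁ᵀ A q₂)). -/
/-!
Both problems split into one condition per player on a pair (strategy, cost vector), namely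
`(p₁, A p₂)` and `(p₂, Bᵀ p₁)`. Complementarity gives `p₁ ⬝ A p₂ = Σ p₁`, so after normalizing
every pure cost is at least the expected cost: the normalized vector is a best response.
Conversely a best response `q` against `w` is supported on the cheapest pure strategies, so
dividing `w` by the value `q ⬝ w`, which is positive because `A, B > 0`, gives the LCP
conditions for any nonnegative multiple of `q`.
-/

open scoped Matrix

open Matrix Finset

section OnePlayer

variable {k : ℕ} {q w : Fin k → ℝ}

theorem inSimplex_single (i : Fin k) : InSimplex (Pi.single i 1 : Fin k → ℝ) :=
  ⟨fun j => by by_cases h : j = i <;> simp [h], by simp⟩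

theorem inSimplex_inv_sum_smul {x : Fin k → ℝ} (hx : ∀ i, 0 ≤ x i) (hs : 0 < ∑ i, x i) :
    InSimplex ((∑ i, x i)⁻¹ • x) :=
  ⟨fun i => mul_nonneg (inv_nonneg.2 hs.le) (hx i), by
    simp only [Pi.smul_apply, smul_eq_mul, ← mul_sum, inv_mul_cancel₀ hs.ne']⟩

theorem InSimplex.le_dotProduct {c : ℝ} (hq : InSimplex q) (hw : ∀ i, c ≤ w i) :
    c ≤ q ⬝ᵥ w :=
  calc c = ∑ i, q i * c := by rw [← sum_mul, hq.2, one_mul]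
    _ ≤ q ⬝ᵥ w := sum_le_sum fun i _ => mul_le_mul_of_nonneg_left (hw i) (hq.1 i)

theorem InSimplex.dotProduct_pos (hq : InSimplex q) (hw : ∀ i, 0 < w i) : 0 < q ⬝ᵥ w := by
  obtain ⟨i, -, hi⟩ := exists_ne_zero_of_sum_ne_zero (hq.2.symm ▸ one_ne_zero)
  exact sum_pos' (fun i _ => mul_nonneg (hq.1 i) (hw i).le)
    ⟨i, mem_univ i, mul_pos ((hq.1 i).lt_of_ne' hi) (hw i)⟩

theorem InSimplex.dotProduct_mulVec_pos {m : ℕ} {A : Matrix (Fin m) (Fin k) ℝ}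
    {p : Fin m → ℝ} (hA : ∀ i j, 0 < A i j) (hp : InSimplex p) (hq : InSimplex q) :
    0 < p ⬝ᵥ A *ᵥ q :=
  hp.dotProduct_pos fun i => by rw [mulVec, dotProduct_comm]; exact hq.dotProduct_pos (hA i)

theorem InSimplex.mul_sub_dotProduct_eq_zero (hq : InSimplex q) (hw : ∀ i, q ⬝ᵥ w ≤ w i)
    (i : Fin k) : q i * (w i - q ⬝ᵥ w) = 0 := by
  have hsum : ∑ i, q i * (w i - q ⬝ᵥ w) = 0 := by
    simp only [mul_sub, sum_sub_distrib, ← sum_mul, hq.2, one_mul, dotProduct, sub_self]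
  exact (sum_eq_zero_iff_of_nonneg fun i _ => mul_nonneg (hq.1 i) (sub_nonneg.2 (hw i))).1
    hsum i (mem_univ i)

/-- `w i` is the cost of the pure strategy `i`. -/
def IsBestResponse (q w : Fin k → ℝ) : Prop :=
  InSimplex q ∧ ∀ q' : Fin k → ℝ, InSimplex q' → q ⬝ᵥ w ≤ q' ⬝ᵥ w

theorem isBestResponse_iff (hq : InSimplex q) : IsBestResponse q w ↔ ∀ i, q ⬝ᵥ w ≤ w i :=
  ⟨fun h i => by simpa using h.2 _ (inSimplex_single i),
    fun h => ⟨hq, fun _ hq' => hq'.le_dotProduct h⟩⟩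

theorem IsBestResponse.smul {c : ℝ} (h : IsBestResponse q w) (hc : 0 < c) :
    IsBestResponse q (c • w) :=
  ⟨h.1, fun q' hq' => by
    simpa only [dotProduct_smul, smul_eq_mul] using mul_le_mul_of_nonneg_left (h.2 q' hq') hc.le⟩

def IsLCPBlock {ι : Type*} (x w : ι → ℝ) : Prop :=
  (∀ i, 0 ≤ x i) ∧ (∀ i, 1 ≤ w i) ∧ ∀ i, x i * (w i - 1) = 0

theorem IsLCPBlock.dotProduct_eq_sum {ι : Type*} [Fintype ι] {x w : ι → ℝ}
    (h : IsLCPBlock x w) : x ⬝ᵥ w = ∑ i, x i :=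
  sum_congr rfl fun i _ => by linear_combination h.2.2 i

theorem IsLCPBlock.isBestResponse_inv_sum_smul {x : Fin k → ℝ} (h : IsLCPBlock x w)
    (hs : 0 < ∑ i, x i) : IsBestResponse ((∑ i, x i)⁻¹ • x) w := by
  refine (isBestResponse_iff (inSimplex_inv_sum_smul h.1 hs)).2 fun i => ?_
  rw [smul_dotProduct, h.dotProduct_eq_sum, smul_eq_mul, inv_mul_cancel₀ hs.ne']
  exact h.2.1 i

theorem IsBestResponse.isLCPBlock {c : ℝ} (h : IsBestResponse q w) (hv : 0 < q ⬝ᵥ w)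
    (hc : 0 ≤ c) : IsLCPBlock (c • q) ((q ⬝ᵥ w)⁻¹ • w) := by
  have hmin := (isBestResponse_iff h.1).1 h
  refine ⟨fun i => mul_nonneg hc (h.1.1 i), fun i => ?_, fun i => ?_⟩
  · simpa only [Pi.smul_apply, smul_eq_mul, le_inv_mul_iff₀ hv, mul_one] using hmin i
  · calc (c • q) i * (((q ⬝ᵥ w)⁻¹ • w) i - 1)
        = c * (q ⬝ᵥ w)⁻¹ * (q i * (w i - q ⬝ᵥ w)) := by
          simp only [Pi.smul_apply, smul_eq_mul]; field_simp
      _ = 0 := by rw [h.1.mul_sub_dotProduct_eq_zero hmin i, mul_zero]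

end OnePlayer

theorem sum_pos_of_one_le_mulVec {ι κ : Type*} [Fintype ι] [Nonempty κ] {M : Matrix κ ι ℝ}
    {x : ι → ℝ} (hx : ∀ i, 0 ≤ x i) (h : ∀ j, 1 ≤ (M *ᵥ x) j) : 0 < ∑ i, x i := by
  refine (sum_nonneg fun i _ => hx i).lt_of_ne' fun hs => ?_
  have hx0 : x = 0 := (Fintype.sum_eq_zero_iff_of_nonneg hx).1 hs
  obtain ⟨j⟩ := ‹Nonempty κ›
  linarith [show (M *ᵥ x) j = 0 by simp [hx0], h j]

section TwoPlayer

variable {m n : ℕ} {A B : Matrix (Fin m) (Fin n) ℝ}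

theorem isLCPSolution_iff {p₁ : Fin m → ℝ} {p₂ : Fin n → ℝ} :
    IsLCPSolution A B p₁ p₂ ↔ IsLCPBlock p₁ (A *ᵥ p₂) ∧ IsLCPBlock p₂ (Bᵀ *ᵥ p₁) := by
  unfold IsLCPSolution IsLCPBlock; tauto

theorem isBimatrixNash_iff {q₁ : Fin m → ℝ} {q₂ : Fin n → ℝ} :
    IsBimatrixNash A B q₁ q₂ ↔ IsBestResponse q₁ (A *ᵥ q₂) ∧ IsBestResponse q₂ (Bᵀ *ᵥ q₁) := by
  simp only [IsBimatrixNash, IsBestResponse, ← dotProduct_transpose_mulVec B]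
  tauto

noncomputable def normalizePair (p : (Fin m → ℝ) × (Fin n → ℝ)) : (Fin m → ℝ) × (Fin n → ℝ) :=
  ((∑ i, p.1 i)⁻¹ • p.1, (∑ j, p.2 j)⁻¹ • p.2)

noncomputable def rescalePair (A B : Matrix (Fin m) (Fin n) ℝ) (q : (Fin m → ℝ) × (Fin n → ℝ)) :
    (Fin m → ℝ) × (Fin n → ℝ) :=
  ((q.1 ⬝ᵥ B *ᵥ q.2)⁻¹ • q.1, (q.1 ⬝ᵥ A *ᵥ q.2)⁻¹ • q.2)

variable {p : (Fin m → ℝ) × (Fin n → ℝ)}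

theorem IsLCPSolution.sum_pos (hm : 0 < m) (hn : 0 < n) (hp : IsLCPSolution A B p.1 p.2) :
    0 < ∑ i, p.1 i ∧ 0 < ∑ j, p.2 j :=
  have : Nonempty (Fin m) := ⟨⟨0, hm⟩⟩
  have : Nonempty (Fin n) := ⟨⟨0, hn⟩⟩
  ⟨sum_pos_of_one_le_mulVec hp.1 hp.2.2.2.1, sum_pos_of_one_le_mulVec hp.2.1 hp.2.2.1⟩

theorem IsLCPSolution.isBimatrixNash_normalizePair (hm : 0 < m) (hn : 0 < n)
    (hp : IsLCPSolution A B p.1 p.2) :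
    IsBimatrixNash A B (normalizePair p).1 (normalizePair p).2 := by
  obtain ⟨hs₁, hs₂⟩ := hp.sum_pos hm hn
  obtain ⟨h₁, h₂⟩ := isLCPSolution_iff.1 hp
  rw [isBimatrixNash_iff, normalizePair, mulVec_smul, mulVec_smul]
  exact ⟨(h₁.isBestResponse_inv_sum_smul hs₁).smul (inv_pos.2 hs₂),
    (h₂.isBestResponse_inv_sum_smul hs₂).smul (inv_pos.2 hs₁)⟩

theorem IsLCPSolution.rescalePair_normalizePair (hm : 0 < m) (hn : 0 < n)
    (hp : IsLCPSolution A B p.1 p.2) : rescalePair A B (normalizePair p) = p := by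
  obtain ⟨hs₁, hs₂⟩ := hp.sum_pos hm hn
  obtain ⟨h₁, h₂⟩ := isLCPSolution_iff.1 hp
  have hvA := h₁.dotProduct_eq_sum
  have hvB := h₂.dotProduct_eq_sum
  rw [dotProduct_transpose_mulVec] at hvB
  simp only [rescalePair, normalizePair, mulVec_smul, smul_dotProduct, dotProduct_smul, hvA, hvB,
    smul_eq_mul, smul_smul]
  refine Prod.ext ?_ ?_ <;> dsimp only <;> convert one_smul ℝ _ using 2 <;> field_simp

variable {q : (Fin m → ℝ) × (Fin n → ℝ)}

theorem IsBimatrixNash.isLCPSolution_rescalePair (hA : ∀ i j, 0 < A i j)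
    (hB : ∀ i j, 0 < B i j) (hq : IsBimatrixNash A B q.1 q.2) :
    IsLCPSolution A B (rescalePair A B q).1 (rescalePair A B q).2 := by
  obtain ⟨h₁, h₂⟩ := isBimatrixNash_iff.1 hq
  have hvA := hq.1.dotProduct_mulVec_pos hA hq.2.1
  have hvB := hq.1.dotProduct_mulVec_pos hB hq.2.1
  rw [isLCPSolution_iff, rescalePair, mulVec_smul, mulVec_smul]
  rw [← dotProduct_transpose_mulVec B] at hvB ⊢
  exact ⟨h₁.isLCPBlock hvA (inv_nonneg.2 hvB.le), h₂.isLCPBlock hvB (inv_nonneg.2 hvA.le)⟩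

theorem IsBimatrixNash.normalizePair_rescalePair (hA : ∀ i j, 0 < A i j)
    (hB : ∀ i j, 0 < B i j) (hq : IsBimatrixNash A B q.1 q.2) :
    normalizePair (rescalePair A B q) = q := by
  have hvA := hq.1.dotProduct_mulVec_pos hA hq.2.1
  have hvB := hq.1.dotProduct_mulVec_pos hB hq.2.1
  simp only [normalizePair, rescalePair, Pi.smul_apply, smul_eq_mul, ← mul_sum, hq.1.2,
    hq.2.1.2, mul_one, inv_inv, smul_smul]
  refine Prod.ext ?_ ?_ <;> dsimp only <;> convert one_smul ℝ _ using 2 <;> field_simp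

end TwoPlayer

/-- The normalization map `(p₁, p₂) ↦ (p₁ / Σᵢ (p₁)ᵢ, p₂ / Σⱼ (p₂)ⱼ)` is a
bijection from the set of LCP solutions for `(A, B)` (with strictly positive
entries) onto the set of Nash equilibria of the bimatrix game `(A, B)`, with
inverse `(q₁, q₂) ↦ (q₁ / (q₁ᵀ B q₂), q₂ / (q₁ᵀ A q₂))`. -/
theorem lcp_nash_normalization_bijection {m n : ℕ}
    (hm : 0 < m) (hn : 0 < n) (A B : Matrix (Fin m) (Fin n) ℝ)
    (hA : ∀ i j, 0 < A i j) (hB : ∀ i j, 0 < B i j) :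
    Set.BijOn
      (fun p : (Fin m → ℝ) × (Fin n → ℝ) =>
        ((fun i => p.1 i / ∑ i', p.1 i'), (fun j => p.2 j / ∑ j', p.2 j')))
      {p : (Fin m → ℝ) × (Fin n → ℝ) | IsLCPSolution A B p.1 p.2}
      {q : (Fin m → ℝ) × (Fin n → ℝ) | IsBimatrixNash A B q.1 q.2} ∧
    Set.InvOn
      (fun q : (Fin m → ℝ) × (Fin n → ℝ) =>
        ((fun i => q.1 i / (q.1 ⬝ᵥ B.mulVec q.2)),
         (fun j => q.2 j / (q.1 ⬝ᵥ A.mulVec q.2))))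
      (fun p : (Fin m → ℝ) × (Fin n → ℝ) =>
        ((fun i => p.1 i / ∑ i', p.1 i'), (fun j => p.2 j / ∑ j', p.2 j')))
      {p : (Fin m → ℝ) × (Fin n → ℝ) | IsLCPSolution A B p.1 p.2}
      {q : (Fin m → ℝ) × (Fin n → ℝ) | IsBimatrixNash A B q.1 q.2} := by
  have hnormalize : (fun p : (Fin m → ℝ) × (Fin n → ℝ) =>
      ((fun i => p.1 i / ∑ i', p.1 i'), (fun j => p.2 j / ∑ j', p.2 j'))) = normalizePair := by
    funext p; simp only [normalizePair, div_eq_inv_mul]; rfl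
  have hrescale : (fun q : (Fin m → ℝ) × (Fin n → ℝ) =>
      ((fun i => q.1 i / (q.1 ⬝ᵥ B.mulVec q.2)), (fun j => q.2 j / (q.1 ⬝ᵥ A.mulVec q.2)))) =
      rescalePair A B := by
    funext q; simp only [rescalePair, div_eq_inv_mul]; rfl
  rw [hnormalize, hrescale]
  have hinv : Set.InvOn (rescalePair A B) normalizePair
      {p | IsLCPSolution A B p.1 p.2} {q | IsBimatrixNash A B q.1 q.2} :=
    ⟨fun _ hp => IsLCPSolution.rescalePair_normalizePair hm hn hp,
      fun _ hq => IsBimatrixNash.normalizePair_rescalePair hA hB hq⟩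
  exact ⟨hinv.bijOn (fun _ hp => IsLCPSolution.isBimatrixNash_normalizePair hm hn hp)
    (fun _ hq => IsBimatrixNash.isLCPSolution_rescalePair hA hB hq), hinv⟩
end

section
/- Let (p₁, p₂) be an LCP solution for real m×n matrices (A, B) at which strict complementarity holds: for each i, exactly one of (p₁)ᵢ = 0 and (A p₂)ᵢ = 1 holds, and for each j, exactly one of (p₂)ⱼ = 0 and (Bᵀ p₁)ⱼ = 1 holds. Let I₁⁺ = {i : (p₁)ᵢ > 0}, I₂⁺ = {j : (p₂)ⱼ > 0}, and let A⁺, B⁺ be the submatrices of A, B with rows indexed by I₁⁺ and columns indexed by I₂⁺. If the block matrix [[0, A⁺], [(B⁺)ᵀ, 0]] is not invertible, then the solution (p₁, p₂) is non-isolated: there exist a nonzero pair (d₁, d₂) ∈ ℝᵐ × ℝⁿ, with dᵢ vanishing outside the respective support sets I₁⁺ and I₂⁺, and ε > 0 such that (p₁ + t d₁, p₂ + t d₂) is an LCP solution for (A, B) for every t ∈ [0, ε]. In particular, the LCP for (A, B) has infinitely many solutions. -/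
open scoped Matrix

private lemma aux_eps {ι : Type*} [Fintype ι] (c s : ι → ℝ) (hc : ∀ k, 0 < c k) :
    ∃ ε > 0, ∀ t ∈ Set.Icc (0:ℝ) ε, ∀ k, 0 ≤ c k + t * s k := by
  classical
  rcases isEmpty_or_nonempty ι with hι | hι
  · exact ⟨1, one_pos, fun t _ k => (IsEmpty.false k).elim⟩
  · refine ⟨Finset.univ.inf' Finset.univ_nonempty (fun k => c k / (|s k| + 1)), ?_, ?_⟩
    · rw [gt_iff_lt, Finset.lt_inf'_iff]
      intro k _
      exact div_pos (hc k) (by positivity)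
    · intro t ht k
      have h1 : t ≤ c k / (|s k| + 1) :=
        le_trans ht.2 (Finset.inf'_le _ (Finset.mem_univ k))
      have h2 : t * (|s k| + 1) ≤ c k := (le_div_iff₀ (by positivity)).mp h1
      have h3 : t * (-|s k|) ≤ t * s k :=
        mul_le_mul_of_nonneg_left (neg_abs_le _) ht.1
      rw [mul_neg] at h3
      rw [mul_add, mul_one] at h2
      linarith [ht.1]

/-- If strict complementarity holds at an LCP solution `(p₁, p₂)` but the block
matrix `[[0, A⁺], [(B⁺)ᵀ, 0]]` over the supports is singular, then the solution
is non-isolated: a whole segment of LCP solutions through `(p₁, p₂)` exists,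
and in particular there are infinitely many LCP solutions. -/
theorem lcp_singular_support_block_nonisolated {m n : ℕ}
    (A B : Matrix (Fin m) (Fin n) ℝ)
    (p₁ : Fin m → ℝ) (p₂ : Fin n → ℝ) (h : IsLCPSolution A B p₁ p₂)
    (hsc₁ : ∀ i, Xor' (p₁ i = 0) (A.mulVec p₂ i = 1))
    (hsc₂ : ∀ j, Xor' (p₂ j = 0) (Bᵀ.mulVec p₁ j = 1))
    (hsing : ¬ IsUnit (Matrix.fromBlocks
      (0 : Matrix {i // 0 < p₁ i} {i // 0 < p₁ i} ℝ)
      (A.submatrix (Subtype.val : {i // 0 < p₁ i} → Fin m)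
        (Subtype.val : {j // 0 < p₂ j} → Fin n))
      (B.submatrix (Subtype.val : {i // 0 < p₁ i} → Fin m)
        (Subtype.val : {j // 0 < p₂ j} → Fin n))ᵀ
      (0 : Matrix {j // 0 < p₂ j} {j // 0 < p₂ j} ℝ))) :
    (∃ (d₁ : Fin m → ℝ) (d₂ : Fin n → ℝ),
      ¬ (d₁ = 0 ∧ d₂ = 0) ∧
      (∀ i, ¬ 0 < p₁ i → d₁ i = 0) ∧ (∀ j, ¬ 0 < p₂ j → d₂ j = 0) ∧
      ∃ ε > (0 : ℝ), ∀ t ∈ Set.Icc (0 : ℝ) ε,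
        IsLCPSolution A B (p₁ + t • d₁) (p₂ + t • d₂)) ∧
    {p : (Fin m → ℝ) × (Fin n → ℝ) | IsLCPSolution A B p.1 p.2}.Infinite := by
  classical
  obtain ⟨hp₁, hp₂, hA1, hB1, hcc₁, hcc₂⟩ := h
  -- strict complementarity consequences
  have key₁ : ∀ i, 0 < p₁ i → A.mulVec p₂ i = 1 := by
    intro i hi
    rcases mul_eq_zero.mp (hcc₁ i) with h' | h'
    · exact absurd h' (ne_of_gt hi)
    · linarith
  have key₁' : ∀ i, ¬ 0 < p₁ i → 1 < A.mulVec p₂ i := by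
    intro i hi
    have hz : p₁ i = 0 := le_antisymm (not_lt.mp hi) (hp₁ i)
    rcases hsc₁ i with ⟨_, hne⟩ | ⟨_, hnz⟩
    · exact lt_of_le_of_ne (hA1 i) (Ne.symm hne)
    · exact absurd hz hnz
  have key₂ : ∀ j, 0 < p₂ j → Bᵀ.mulVec p₁ j = 1 := by
    intro j hj
    rcases mul_eq_zero.mp (hcc₂ j) with h' | h'
    · exact absurd h' (ne_of_gt hj)
    · linarith
  have key₂' : ∀ j, ¬ 0 < p₂ j → 1 < Bᵀ.mulVec p₁ j := by
    intro j hj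
    have hz : p₂ j = 0 := le_antisymm (not_lt.mp hj) (hp₂ j)
    rcases hsc₂ j with ⟨_, hne⟩ | ⟨_, hnz⟩
    · exact lt_of_le_of_ne (hB1 j) (Ne.symm hne)
    · exact absurd hz hnz
  -- kernel vector of the block matrix
  have hdet : (Matrix.fromBlocks
      (0 : Matrix {i // 0 < p₁ i} {i // 0 < p₁ i} ℝ)
      (A.submatrix (Subtype.val : {i // 0 < p₁ i} → Fin m)
        (Subtype.val : {j // 0 < p₂ j} → Fin n))
      (B.submatrix (Subtype.val : {i // 0 < p₁ i} → Fin m)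
        (Subtype.val : {j // 0 < p₂ j} → Fin n))ᵀ
      (0 : Matrix {j // 0 < p₂ j} {j // 0 < p₂ j} ℝ)).det = 0 := by
    by_contra hd
    exact hsing ((Matrix.isUnit_iff_isUnit_det _).mpr (isUnit_iff_ne_zero.mpr hd))
  obtain ⟨v, hv0, hvM⟩ := Matrix.exists_mulVec_eq_zero_iff.mpr hdet
  rw [Matrix.fromBlocks_mulVec] at hvM
  have hAy : ∀ i : {i // 0 < p₁ i},
      ∑ j : {j // 0 < p₂ j}, A i.1 j.1 * v (Sum.inr j) = 0 := by
    intro i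
    have := congrFun hvM (Sum.inl i)
    simpa [Matrix.mulVec, dotProduct, Function.comp] using this
  have hBx : ∀ j : {j // 0 < p₂ j},
      ∑ i : {i // 0 < p₁ i}, B i.1 j.1 * v (Sum.inl i) = 0 := by
    intro j
    have := congrFun hvM (Sum.inr j)
    simpa [Matrix.mulVec, dotProduct, Function.comp] using this
  -- the direction
  set d₁ : Fin m → ℝ := fun i => if h : 0 < p₁ i then v (Sum.inl ⟨i, h⟩) else 0 with hd₁
  set d₂ : Fin n → ℝ := fun j => if h : 0 < p₂ j then v (Sum.inr ⟨j, h⟩) else 0 with hd₂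
  have hd₁supp : ∀ i, ¬ 0 < p₁ i → d₁ i = 0 := fun i hi => dif_neg hi
  have hd₂supp : ∀ j, ¬ 0 < p₂ j → d₂ j = 0 := fun j hj => dif_neg hj
  have hAd : ∀ i, A.mulVec d₂ i = ∑ j : {j // 0 < p₂ j}, A i j.1 * v (Sum.inr j) := by
    intro i
    rw [Matrix.mulVec, dotProduct]
    calc ∑ j, A i j * d₂ j
        = ∑ j ∈ Finset.univ.filter (fun j => 0 < p₂ j), A i j * d₂ j := by
          refine (Finset.sum_filter_of_ne ?_).symm
          intro j _ hj
          by_contra hc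
          exact hj (by simp [hd₂, dif_neg hc])
      _ = ∑ j : {j // 0 < p₂ j}, A i j.1 * d₂ j.1 :=
          Finset.sum_subtype _ (by simp) _
      _ = ∑ j : {j // 0 < p₂ j}, A i j.1 * v (Sum.inr j) := by
          refine Finset.sum_congr rfl fun j _ => ?_
          simp [hd₂, dif_pos j.2]
  have hBd : ∀ j, Bᵀ.mulVec d₁ j = ∑ i : {i // 0 < p₁ i}, B i.1 j * v (Sum.inl i) := by
    intro j
    rw [Matrix.mulVec, dotProduct]
    calc ∑ i, Bᵀ j i * d₁ i
        = ∑ i ∈ Finset.univ.filter (fun i => 0 < p₁ i), Bᵀ j i * d₁ i := by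
          refine (Finset.sum_filter_of_ne ?_).symm
          intro i _ hi
          by_contra hc
          exact hi (by simp [hd₁, dif_neg hc])
      _ = ∑ i : {i // 0 < p₁ i}, Bᵀ j i.1 * d₁ i.1 :=
          Finset.sum_subtype _ (by simp) _
      _ = ∑ i : {i // 0 < p₁ i}, B i.1 j * v (Sum.inl i) := by
          refine Finset.sum_congr rfl fun i _ => ?_
          simp [hd₁, dif_pos i.2, Matrix.transpose_apply]
  have hAd0 : ∀ i, 0 < p₁ i → A.mulVec d₂ i = 0 := fun i hi =>
    (hAd i).trans (hAy ⟨i, hi⟩)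
  have hBd0 : ∀ j, 0 < p₂ j → Bᵀ.mulVec d₁ j = 0 := fun j hj =>
    (hBd j).trans (hBx ⟨j, hj⟩)
  have hdne : ¬ (d₁ = 0 ∧ d₂ = 0) := by
    rintro ⟨h1, h2⟩
    apply hv0
    funext k
    rcases k with i | j
    · have := congrFun h1 i.1
      simpa [hd₁, dif_pos i.2] using this
    · have := congrFun h2 j.1
      simpa [hd₂, dif_pos j.2] using this
  -- choose ε
  obtain ⟨ε, hε, hεt⟩ := aux_eps
    (Sum.elim (fun i => if 0 < p₁ i then p₁ i else A.mulVec p₂ i - 1)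
      (fun j => if 0 < p₂ j then p₂ j else Bᵀ.mulVec p₁ j - 1))
    (Sum.elim (fun i => if 0 < p₁ i then d₁ i else A.mulVec d₂ i)
      (fun j => if 0 < p₂ j then d₂ j else Bᵀ.mulVec d₁ j))
    (by
      rintro (i | j)
      · by_cases hi : 0 < p₁ i
        · simpa [if_pos hi] using hi
        · simpa [if_neg hi] using sub_pos.mpr (key₁' i hi)
      · by_cases hj : 0 < p₂ j
        · simpa [if_pos hj] using hj
        · simpa [if_neg hj] using sub_pos.mpr (key₂' j hj))
  have hsol : ∀ t ∈ Set.Icc (0:ℝ) ε, IsLCPSolution A B (p₁ + t • d₁) (p₂ + t • d₂) := by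
    intro t ht
    have hmv₂ : A.mulVec (p₂ + t • d₂) = A.mulVec p₂ + t • A.mulVec d₂ := by
      rw [Matrix.mulVec_add, Matrix.mulVec_smul]
    have hmv₁ : Bᵀ.mulVec (p₁ + t • d₁) = Bᵀ.mulVec p₁ + t • Bᵀ.mulVec d₁ := by
      rw [Matrix.mulVec_add, Matrix.mulVec_smul]
    refine ⟨?_, ?_, ?_, ?_, ?_, ?_⟩
    · intro i
      by_cases hi : 0 < p₁ i
      · have := hεt t ht (Sum.inl i)
        simp only [Sum.elim_inl, if_pos hi] at this
        simpa [smul_eq_mul] using this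
      · simp [hd₁supp i hi, hp₁ i]
    · intro j
      by_cases hj : 0 < p₂ j
      · have := hεt t ht (Sum.inr j)
        simp only [Sum.elim_inr, if_pos hj] at this
        simpa [smul_eq_mul] using this
      · simp [hd₂supp j hj, hp₂ j]
    · intro i
      rw [hmv₂]
      by_cases hi : 0 < p₁ i
      · simp [key₁ i hi, hAd0 i hi]
      · have := hεt t ht (Sum.inl i)
        simp only [Sum.elim_inl, if_neg hi] at this
        simp only [Pi.add_apply, Pi.smul_apply, smul_eq_mul]
        linarith
    · intro j
      rw [hmv₁]
      by_cases hj : 0 < p₂ j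
      · simp [key₂ j hj, hBd0 j hj]
      · have := hεt t ht (Sum.inr j)
        simp only [Sum.elim_inr, if_neg hj] at this
        simp only [Pi.add_apply, Pi.smul_apply, smul_eq_mul]
        linarith
    · intro i
      rw [hmv₂]
      by_cases hi : 0 < p₁ i
      · simp [key₁ i hi, hAd0 i hi]
      · have hz : p₁ i = 0 := le_antisymm (not_lt.mp hi) (hp₁ i)
        simp [hz, hd₁supp i hi]
    · intro j
      rw [hmv₁]
      by_cases hj : 0 < p₂ j
      · simp [key₂ j hj, hBd0 j hj]
      · have hz : p₂ j = 0 := le_antisymm (not_lt.mp hj) (hp₂ j)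
        simp [hz, hd₂supp j hj]
  refine ⟨⟨d₁, d₂, hdne, hd₁supp, hd₂supp, ε, hε, hsol⟩, ?_⟩
  have hinj : Set.InjOn (fun t : ℝ => (p₁ + t • d₁, p₂ + t • d₂)) (Set.Icc 0 ε) := by
    intro t _ t' _ hEq
    by_cases hd1 : d₁ = 0
    · have hd2 : d₂ ≠ 0 := fun h2 => hdne ⟨hd1, h2⟩
      obtain ⟨j, hj⟩ := Function.ne_iff.mp hd2
      have hj' : d₂ j ≠ 0 := by simpa using hj
      have := congrFun (congrArg Prod.snd hEq) j
      simp only [Pi.add_apply, Pi.smul_apply, smul_eq_mul, add_right_inj] at this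
      exact mul_right_cancel₀ hj' this
    · obtain ⟨i, hi⟩ := Function.ne_iff.mp hd1
      have hi' : d₁ i ≠ 0 := by simpa using hi
      have := congrFun (congrArg Prod.fst hEq) i
      simp only [Pi.add_apply, Pi.smul_apply, smul_eq_mul, add_right_inj] at this
      exact mul_right_cancel₀ hi' this
  have himg := Set.Infinite.image hinj (Set.Icc_infinite hε)
  refine himg.mono ?_
  rintro p ⟨t, ht, rfl⟩
  exact hsol t ht
end
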